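/- Let {f_t : t ∈ T} ⊂ Γ₀(X) be a nonempty family, f := sup_{t∈T} f_t, and x ∈ dom f. Assume the standard hypothesis (SH) holds and that every index is active at x, i.e. T(x) = T. Then ∂f(x) = ⋂_{ε>0} co‾( ⋃_{t∈T} ∂_ε f_t(x) ). -/

import Mathlib

/-!
Since every `f t` agrees with `f` at `x`, each `∂_ε f_t(x)` lies in `∂_ε f(x)`, which is
weak*-closed and convex; intersecting over `ε > 0` gives `⊇`.

Conversely, if `p ∈ ∂f(x)` lay outside `co‾(⋃ ∂_ε f_t(x))`, a weak*-continuous functional,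
i.e. evaluation at some `z : X`, would separate them: `⟨q, z⟩ < u < ⟨p, z⟩`. Separating the
epigraph of `f t` from a segment issuing from `(x, f(x) - ε)` then shows
`f t (x + s • z) < f(x) + s (u + γ)` for some `s > 0`. By upper semicontinuity in `t` and
compactness of `T` finitely many such `s` suffice, and convexity lets their minimum serve every
`t`; hence `f (x + s • z) ≤ f(x) + s (u + γ)`, contradicting `p ∈ ∂f(x)` once `u + γ < ⟨p, z⟩`.
-/

open Set Pointwise Topology
open scoped Classical

noncomputable section

variable {X : Type*} [AddCommGroup X] [Module ℝ X] [TopologicalSpace X]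
  [IsTopologicalAddGroup X] [ContinuousSMul ℝ X] [LocallyConvexSpace ℝ X] [T2Space X]

/-- Convexity for extended-real-valued functions. -/
def EConvexOn' (f : X → EReal) : Prop :=
  ∀ x y : X, ∀ a b : ℝ, 0 ≤ a → 0 ≤ b → a + b = 1 →
    f (a • x + b • y) ≤ (a : EReal) * f x + (b : EReal) * f y

/-- `f ∈ Γ₀(X)`: proper, convex and lower semicontinuous. -/
def Gamma0 (f : X → EReal) : Prop :=
  (∀ x, f x ≠ ⊥) ∧ (∃ x, f x ≠ ⊤) ∧ EConvexOn' f ∧ LowerSemicontinuous f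

/-- Effective domain of `f`. -/
def edom (f : X → EReal) : Set X := {x | f x ≠ ⊤}

/-- The ε-subdifferential of `f` at `x` (a subset of the weak* dual);
it is empty when `ε < 0` or `f x ∉ ℝ`. -/
def esubdiff (f : X → EReal) (x : X) (ε : ℝ) : Set (WeakDual ℝ X) :=
  {p | 0 ≤ ε ∧ f x ≠ ⊤ ∧ f x ≠ ⊥ ∧
    ∀ y : X, f x + ((p y - p x - ε : ℝ) : EReal) ≤ f y}

/-- Normal cone to `A` at `x` (empty when `x ∉ A`). -/
def normalCone (A : Set X) (x : X) : Set (WeakDual ℝ X) :=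
  {p | x ∈ A ∧ ∀ y ∈ A, p y - p x ≤ 0}

/-- Recession cone of a set. -/
def recCone {V : Type*} [AddCommMonoid V] [Module ℝ V] (C : Set V) : Set V :=
  {y | ∃ c ∈ C, ∀ l : ℝ, 0 ≤ l → c + l • y ∈ C}

/-- Closed convex hull of a set. -/
def cclo {V : Type*} [AddCommMonoid V] [Module ℝ V] [TopologicalSpace V] (S : Set V) : Set V :=
  closure (convexHull ℝ S)

/-- `sMul l f` is the function `l·f`, with the convention `0·f = I_{dom f}`
(i.e. `(l·f) z = +∞` whenever `f z = +∞`). -/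
def sMul (l : ℝ) (f : X → EReal) : X → EReal :=
  fun z => if f z = ⊤ then ⊤ else (l : EReal) * f z

section Convexity

variable {E : Type*} [AddCommGroup E] [Module ℝ E]

lemma EConvexOn'.convex_epigraph {g : E → EReal} (hg : EConvexOn' g) :
    Convex ℝ {p : E × ℝ | g p.1 ≤ p.2} := by
  rintro ⟨v₁, μ₁⟩ h₁ ⟨v₂, μ₂⟩ h₂ a b ha hb hab
  calc g (a • v₁ + b • v₂) ≤ (a : EReal) * g v₁ + (b : EReal) * g v₂ := hg v₁ v₂ a b ha hb hab
    _ ≤ (a : EReal) * μ₁ + (b : EReal) * μ₂ := by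
      gcongr
      exacts [h₁, h₂]
    _ = ((a • (v₁, μ₁) + b • (v₂, μ₂) : E × ℝ).2 : EReal) := by
      simp only [Prod.snd_add, Prod.smul_snd, smul_eq_mul, EReal.coe_add, EReal.coe_mul]

lemma EConvexOn'.apply_add_smul_le {g : E → EReal} (hg : EConvexOn' g) {x z : E} {r s s' w : ℝ}
    (hgx : g x = r) (hs : g (x + s • z) ≤ ((r + s * w : ℝ) : EReal)) (hs' : 0 ≤ s') (hs's : s' ≤ s) :
    g (x + s' • z) ≤ ((r + s' * w : ℝ) : EReal) := by
  rcases hs'.eq_or_lt with rfl | hs'pos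
  · simpa using hgx.le
  have hspos : 0 < s := hs'pos.trans_le hs's
  set l := s' / s
  have hl : 0 ≤ l := by positivity
  have hl1 : 0 ≤ 1 - l := sub_nonneg.2 ((div_le_one hspos).2 hs's)
  have hpoint : (1 - l) • x + l • (x + s • z) = x + s' • z := by
    rw [smul_add, smul_smul, div_mul_cancel₀ _ hspos.ne', ← add_assoc, ← add_smul, sub_add_cancel,
      one_smul]
  calc g (x + s' • z) ≤ ((1 - l : ℝ) : EReal) * g x + (l : EReal) * g (x + s • z) := by
        simpa only [hpoint] using hg x (x + s • z) (1 - l) l hl1 hl (sub_add_cancel 1 l)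
    _ ≤ ((1 - l : ℝ) : EReal) * r + (l : EReal) * ((r + s * w : ℝ) : EReal) := by
      rw [hgx]; gcongr
    _ = ((r + s' * w : ℝ) : EReal) := by
      rw [← EReal.coe_mul, ← EReal.coe_mul, ← EReal.coe_add, EReal.coe_eq_coe_iff]
      simp only [l]; field_simp; ring

lemma exists_pos_forall_apply_add_smul_le {T : Type*} [TopologicalSpace T] [CompactSpace T]
    [Nonempty T] {g : T → E → EReal} (hconv : ∀ t, EConvexOn' (g t))
    (husc : ∀ y, UpperSemicontinuous fun t => g t y) {x z : E} {r w : ℝ} (hgx : ∀ t, g t x = r)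
    (hstep : ∀ t, ∃ s > 0, g t (x + s • z) < ((r + s * w : ℝ) : EReal)) :
    ∃ s > 0, ∀ t, g t (x + s • z) ≤ ((r + s * w : ℝ) : EReal) := by
  let U : {s : ℝ // 0 < s} → Set T := fun s =>
    (fun t => g t (x + s.1 • z)) ⁻¹' Iio ((r + s.1 * w : ℝ) : EReal)
  obtain ⟨F, hF⟩ := isCompact_univ.elim_finite_subcover U (fun s => (husc _).isOpen_preimage _)
    fun t _ => by
      obtain ⟨s, hs, hlt⟩ := hstep t
      exact mem_iUnion.2 ⟨⟨s, hs⟩, hlt⟩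
  have hF_ne : F.Nonempty := by
    obtain ⟨s, hs, -⟩ := mem_iUnion₂.1 (hF (mem_univ (Classical.arbitrary T)))
    exact ⟨s, hs⟩
  have hpos : 0 < F.inf' hF_ne Subtype.val := (Finset.lt_inf'_iff hF_ne).2 fun s _ => s.2
  refine ⟨_, hpos, fun t => ?_⟩
  obtain ⟨s, hs, hts⟩ := mem_iUnion₂.1 (hF (mem_univ t))
  exact (hconv t).apply_add_smul_le (hgx t) (le_of_lt hts) hpos.le (F.inf'_le _ hs)

end Convexity

lemma LowerSemicontinuous.isClosed_epigraph_coe {E : Type*} [TopologicalSpace E] {g : E → EReal}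
    (hg : LowerSemicontinuous g) :
    IsClosed {p : E × ℝ | g p.1 ≤ p.2} :=
  (lowerSemicontinuous_iff_isClosed_epigraph.1 hg).preimage
    (continuous_fst.prodMk (continuous_coe_real_ereal.comp continuous_snd))

section Subdifferential

variable {E : Type*} [AddCommGroup E] [Module ℝ E] [TopologicalSpace E]
  {f g : E → EReal} {x : E} {r ε : ℝ}

lemma mem_esubdiff_iff_of_eq (hfx : f x = r) {p : WeakDual ℝ E} :
    p ∈ esubdiff f x ε ↔ 0 ≤ ε ∧ ∀ y, ((r + (p y - p x) - ε : ℝ) : EReal) ≤ f y := by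
  simp only [esubdiff, mem_ofPred_eq, hfx, ne_eq, EReal.coe_ne_top, EReal.coe_ne_bot,
    not_false_eq_true, true_and, ← EReal.coe_add, add_sub_assoc]

lemma esubdiff_eq_iInter_preimage (hfx : f x = r) (hε : 0 ≤ ε) :
    esubdiff f x ε = ⋂ y, (fun p : WeakDual ℝ E => p y - p x) ⁻¹'
      {a : ℝ | ((r + a - ε : ℝ) : EReal) ≤ f y} := by
  ext p
  simp only [mem_esubdiff_iff_of_eq hfx, hε, true_and, mem_iInter, mem_preimage, mem_ofPred_eq]

lemma isClosed_esubdiff_of_eq (hfx : f x = r) (hε : 0 ≤ ε) : IsClosed (esubdiff f x ε) := by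
  rw [esubdiff_eq_iInter_preimage hfx hε]
  refine isClosed_iInter fun y => IsClosed.preimage ?_ ?_
  · exact (WeakDual.eval_continuous y).sub (WeakDual.eval_continuous x)
  · exact isClosed_Iic.preimage (continuous_coe_real_ereal.comp (by fun_prop))

lemma convex_esubdiff_of_eq (hfx : f x = r) (hε : 0 ≤ ε) : Convex ℝ (esubdiff f x ε) := by
  rw [esubdiff_eq_iInter_preimage hfx hε]
  refine convex_iInter fun y => Convex.is_linear_preimage ?_ ?_
  · refine (IsLowerSet.ordConnected (s := {a : ℝ | ((r + a - ε : ℝ) : EReal) ≤ f y})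
      fun a b hba (ha : _ ≤ _) => le_trans (EReal.coe_le_coe_iff.2 (by linarith)) ha).convex
  · exact ⟨fun p q => show p y + q y - (p x + q x) = _ by ring,
      fun c p => show c * p y - c * p x = _ by ring⟩

lemma mem_esubdiff_zero_of_forall_pos (hfx : f x = r) {p : WeakDual ℝ E}
    (hp : ∀ ε > 0, p ∈ esubdiff f x ε) : p ∈ esubdiff f x 0 := by
  refine (mem_esubdiff_iff_of_eq hfx).2 ⟨le_rfl, fun y => le_of_forall_lt fun c hc => ?_⟩
  obtain ⟨a, hca, hab⟩ := EReal.lt_iff_exists_real_btwn.1 hc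
  have hε : 0 < r + (p y - p x) - 0 - a := sub_pos.2 (EReal.coe_lt_coe_iff.1 hab)
  have := ((mem_esubdiff_iff_of_eq hfx).1 (hp _ hε)).2 y
  exact hca.trans_le (le_of_eq_of_le (by congr 1; ring) this)

lemma esubdiff_subset_of_le (hgf : g ≤ f) (hgx : g x = r) (hfx : f x = r) :
    esubdiff g x ε ⊆ esubdiff f x ε := fun p hp => by
  rw [mem_esubdiff_iff_of_eq hgx] at hp
  exact (mem_esubdiff_iff_of_eq hfx).2 ⟨hp.1, fun y => (hp.2 y).trans (hgf y)⟩

instance : LocallyConvexSpace ℝ (WeakDual ℝ E) :=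
  WeakBilin.locallyConvexSpace

lemma WeakDual.exists_eq_eval (Φ : StrongDual ℝ (WeakDual ℝ E)) :
    ∃ z : E, ∀ q : WeakDual ℝ E, Φ q = q z := by
  obtain ⟨z, rfl⟩ := LinearMap.dualEmbedding_surjective (topDualPairing ℝ E) Φ
  exact ⟨z, fun _ => rfl⟩

end Subdifferential

section LocallyConvex

variable {E : Type*} [AddCommGroup E] [Module ℝ E] [TopologicalSpace E]
  [IsTopologicalAddGroup E] [ContinuousSMul ℝ E] [LocallyConvexSpace ℝ E]

lemma Gamma0.exists_affine_minorant_of_disjoint {g : E → EReal} (hg : Gamma0 g)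
    {K : Set (E × ℝ)} (hKconv : Convex ℝ K) (hKcomp : IsCompact K)
    (hKg : Disjoint K {p | g p.1 ≤ p.2}) {x : E} {μ : ℝ} (hxK : (x, μ) ∈ K) (hx : g x ≠ ⊤) :
    ∃ (q : StrongDual ℝ E) (c : ℝ), (∀ y, ((c + q y : ℝ) : EReal) ≤ g y) ∧
      ∀ k ∈ K, k.2 < c + q k.1 := by
  obtain ⟨Φ, u₁, u₂, hK, hu, hepi⟩ := geometric_hahn_banach_compact_closed hKconv hKcomp
    hg.2.2.1.convex_epigraph hg.2.2.2.isClosed_epigraph_coe hKg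
  set q₀ := Φ.comp (ContinuousLinearMap.inl ℝ E ℝ)
  set a := Φ (0, 1)
  have hΦ : ∀ v m, Φ (v, m) = q₀ v + m * a := fun v m => by
    have hvm : ((v, m) : E × ℝ) = (v, 0) + m • (0, 1) := by simp
    rw [hvm, map_add, map_smul, smul_eq_mul]
    rfl
  -- the separating hyperplane is not vertical, since it separates `(x, μ)` from `(x, g x)`
  have ha : 0 < a := by
    obtain ⟨m, hm⟩ : ∃ m : ℝ, g x = m := ⟨_, (EReal.coe_toReal hx (hg.1 x)).symm⟩
    have hμm : μ < m := by
      by_contra! h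
      exact hKg.notMem_of_mem_left hxK (show g x ≤ μ by rw [hm]; exact_mod_cast h)
    have h₁ := hK _ hxK
    have h₂ := hepi (x, m) (show g x ≤ m from hm.le)
    rw [hΦ] at h₁ h₂
    nlinarith
  refine ⟨-a⁻¹ • q₀, u₂ / a, fun y => ?_, fun k hk => ?_⟩
  · rcases eq_or_ne (g y) ⊤ with hy | hy
    · simp [hy]
    obtain ⟨n, hn⟩ : ∃ n : ℝ, g y = n := ⟨_, (EReal.coe_toReal hy (hg.1 y)).symm⟩
    have h := hepi (y, n) (show g y ≤ n from hn.le)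
    rw [hΦ] at h
    rw [hn, EReal.coe_le_coe_iff, smul_apply, smul_eq_mul, div_add' _ _ _ ha.ne',
      div_le_iff₀ ha]
    field_simp
    linarith
  · have h := hK k hk
    rw [← Prod.mk.eta (p := k), hΦ] at h
    rw [smul_apply, smul_eq_mul, div_add' _ _ _ ha.ne', lt_div_iff₀ ha]
    field_simp
    linarith

lemma Gamma0.exists_mem_esubdiff_lt_apply {g : E → EReal} (hg : Gamma0 g) {x z : E}
    {r ε s w : ℝ} (hgx : g x = r) (hε : 0 < ε) (hs : 0 < s)
    (hw : ∀ t ∈ Ioc 0 s, ((r + t * w : ℝ) : EReal) ≤ g (x + t • z)) :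
    ∃ q ∈ esubdiff g x ε, w - ε / s < q z := by
  set P₀ : E × ℝ := (x, r - ε)
  set P₁ : E × ℝ := (x + s • z, r - ε + s * w)
  -- an affine minorant of `g` lying above the segment `[P₀, P₁]` is an `ε`-subgradient at `x`
  -- whose slope along `z` exceeds `w - ε / s`
  have hdisj : Disjoint (segment ℝ P₀ P₁) {p | g p.1 ≤ p.2} := by
    rw [segment_eq_image', disjoint_left]
    rintro _ ⟨θ, ⟨hθ0, hθ1⟩, rfl⟩ hle
    have hP : P₀ + θ • (P₁ - P₀) = (x + (θ * s) • z, r - ε + θ * s * w) := by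
      ext
      · simp [P₀, P₁, smul_smul]
      · simp [P₀, P₁]; ring
    have hgraph : ((r + θ * s * w : ℝ) : EReal) ≤ g (x + (θ * s) • z) := by
      rcases hθ0.eq_or_lt with rfl | hθ
      · simp [hgx]
      exact hw _ ⟨by positivity, by nlinarith⟩
    have hle' : g (x + (θ * s) • z) ≤ ((r - ε + θ * s * w : ℝ) : EReal) := by
      simpa only [hP, mem_ofPred_eq] using hle
    have := EReal.coe_le_coe_iff.1 (hgraph.trans hle')
    linarith
  obtain ⟨q, c, hqg, hqK⟩ := hg.exists_affine_minorant_of_disjoint (convex_segment _ _)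
    (segment_eq_image' ℝ P₀ P₁ ▸ isCompact_Icc.image (by fun_prop)) hdisj
    (left_mem_segment ℝ P₀ P₁) (by simp [hgx])
  have h₀ := hqK P₀ (left_mem_segment ℝ P₀ P₁)
  have h₁ := hqK P₁ (right_mem_segment ℝ P₀ P₁)
  have hcx : c + q x ≤ r := by exact_mod_cast hgx ▸ hqg x
  simp only [P₀, P₁, map_add, map_smul, smul_eq_mul] at h₀ h₁
  refine ⟨q, (mem_esubdiff_iff_of_eq hgx).2 ⟨hε.le, fun y => le_trans ?_ (hqg y)⟩, ?_⟩
  · exact EReal.coe_le_coe_iff.2 (show r + (q y - q x) - ε ≤ c + q y by linarith)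
  · show w - ε / s < q z
    rw [sub_lt_comm, lt_div_iff₀ hs]
    linarith

lemma Gamma0.exists_pos_lt_of_forall_esubdiff_apply_lt {g : E → EReal} (hg : Gamma0 g)
    {x z : E} {r ε u γ : ℝ} (hgx : g x = r) (hε : 0 < ε) (hγ : 0 < γ)
    (hsep : ∀ q ∈ esubdiff g x ε, q z < u) :
    ∃ s > 0, g (x + s • z) < ((r + s * (u + γ) : ℝ) : EReal) := by
  by_contra! h
  obtain ⟨q, hq, hlt⟩ :=
    hg.exists_mem_esubdiff_lt_apply hgx hε (div_pos hε hγ) fun t ht => h t ht.1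
  rw [div_div_cancel₀ hε.ne', add_sub_cancel_right] at hlt
  exact (hsep q hq).not_gt hlt

end LocallyConvex

section Supremum

variable {E : Type*} [AddCommGroup E] [Module ℝ E] [TopologicalSpace E]
  {T : Type*} [Nonempty T] {f : T → E → EReal} {x : E} {r : ℝ}

lemma iInter_cclo_iUnion_esubdiff_subset (hfx : ∀ t, f t x = r) :
    ⋂ (ε : ℝ) (_ : 0 < ε), cclo (⋃ t, esubdiff (f t) x ε) ⊆
      esubdiff (fun z => ⨆ t, f t z) x 0 := by
  have hFx : (⨆ t, f t x) = r := by simp only [hfx, iSup_const]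
  intro p hp
  refine mem_esubdiff_zero_of_forall_pos (f := fun z => ⨆ t, f t z) hFx fun ε hε => ?_
  have hsub : ⋃ t, esubdiff (f t) x ε ⊆ esubdiff (fun z => ⨆ t, f t z) x ε :=
    iUnion_subset fun t => esubdiff_subset_of_le (fun y => le_iSup (f · y) t) (hfx t) hFx
  exact closure_minimal (convexHull_min hsub (convex_esubdiff_of_eq hFx hε.le))
    (isClosed_esubdiff_of_eq hFx hε.le) (mem_iInter₂.1 hp ε hε)

lemma esubdiff_iSup_subset_cclo [IsTopologicalAddGroup E] [ContinuousSMul ℝ E]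
    [LocallyConvexSpace ℝ E] [TopologicalSpace T] [CompactSpace T] (hf : ∀ t, Gamma0 (f t))
    (husc : ∀ y, UpperSemicontinuous fun t => f t y) (hfx : ∀ t, f t x = r) {ε : ℝ} (hε : 0 < ε) :
    esubdiff (fun z => ⨆ t, f t z) x 0 ⊆ cclo (⋃ t, esubdiff (f t) x ε) := by
  intro p hp
  by_contra hpC
  obtain ⟨Φ, u, hC, hpu⟩ :=
    geometric_hahn_banach_closed_point (convex_convexHull ℝ _).closure isClosed_closure hpC
  obtain ⟨z, hz⟩ := WeakDual.exists_eq_eval Φ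
  rw [hz] at hpu
  obtain ⟨γ, hγ, hγu⟩ : ∃ γ > 0, u + γ < p z := ⟨(p z - u) / 2, by linarith, by linarith⟩
  have hstep : ∀ t, ∃ s > 0, f t (x + s • z) < ((r + s * (u + γ) : ℝ) : EReal) := fun t =>
    (hf t).exists_pos_lt_of_forall_esubdiff_apply_lt (hfx t) hε hγ fun q hq =>
      hz q ▸ hC q (subset_closure (subset_convexHull ℝ _ (mem_iUnion_of_mem t hq)))
  obtain ⟨s, hs, hle⟩ := exists_pos_forall_apply_add_smul_le (fun t => (hf t).2.2.1) husc hfx hstep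
  have hFx : (⨆ t, f t x) = r := by simp only [hfx, iSup_const]
  have hsub := ((mem_esubdiff_iff_of_eq (f := fun z => ⨆ t, f t z) hFx).1 hp).2 (x + s • z)
  rw [map_add, map_smul, smul_eq_mul] at hsub
  have := EReal.coe_le_coe_iff.1 (hsub.trans (iSup_le hle))
  linarith [mul_lt_mul_of_pos_left hγu hs]

end Supremum

theorem statement18_general {T : Type*} [TopologicalSpace T] [CompactSpace T] [Nonempty T]
    (f : T → X → EReal) (hf : ∀ t, Gamma0 (f t))
    (husc : ∀ z : X, UpperSemicontinuous fun t => f t z)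
    (x : X) (hx : x ∈ edom (fun z => ⨆ t, f t z))
    (hact : ∀ t, (⨆ s, f s x) ≤ f t x) :
    esubdiff (fun z => ⨆ t, f t z) x 0 =
      ⋂ (ε : ℝ) (_ : 0 < ε), cclo (⋃ t, esubdiff (f t) x ε) := by
  have hbot : (⨆ t, f t x) ≠ ⊥ :=
    ne_bot_of_le_ne_bot ((hf (Classical.arbitrary T)).1 x) (le_iSup (f · x) _)
  obtain ⟨r, hr⟩ : ∃ r : ℝ, (⨆ t, f t x) = r := ⟨_, (EReal.coe_toReal hx hbot).symm⟩
  have hfx : ∀ t, f t x = r := fun t => le_antisymm (hr ▸ le_iSup (f · x) t) (hr ▸ hact t)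
  refine Subset.antisymm ?_ (iInter_cclo_iUnion_esubdiff_subset hfx)
  exact subset_iInter₂ fun ε hε => esubdiff_iSup_subset_cclo hf husc hfx hε

/-- under (SH), if every index is active at `x` (`T(x) = T`), then
`∂f(x) = ⋂_{ε>0} co‾(⋃_{t∈T} ∂_ε f_t(x))`. -/
theorem statement18 {T : Type*} [TopologicalSpace T] [CompactSpace T] [T2Space T] [Nonempty T]
    (f : T → X → EReal) (hf : ∀ t, Gamma0 (f t))
    (husc : ∀ z : X, UpperSemicontinuous fun t => f t z)
    (x : X) (hx : x ∈ edom (fun z => ⨆ t, f t z))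
    (hact : ∀ t, (⨆ s, f s x) ≤ f t x) :
    esubdiff (fun z => ⨆ t, f t z) x 0 =
      ⋂ (ε : ℝ) (_ : 0 < ε), cclo (⋃ t, esubdiff (f t) x ε) :=
  statement18_general f hf husc x hx hact
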